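/- arXiv:1604.08273 — 5 statements merged into one kernel-verified Lean document; each statement's English description precedes it below -/
import Mathlib

section
/- For every natural number n, the n-th symmetric product SP^n(ℂP¹) of the complex projective line is homeomorphic to the complex projective space ℂPⁿ. -/
open CategoryTheory
open scoped LinearAlgebra.Projectivization

noncomputable section

/-- The setoid on `Fin n → X` identifying two tuples when they differ by a
permutation of the coordinates. -/
def symmSetoid (n : ℕ) (X : Type*) : Setoid (Fin n → X) where
  r x y := ∃ γ : Equiv.Perm (Fin n), x ∘ γ = y
  iseqv := by
    constructor
    · intro x; exact ⟨1, rfl⟩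
    · rintro x y ⟨γ, rfl⟩
      exact ⟨γ⁻¹, by ext i; simp⟩
    · rintro x y z ⟨γ, rfl⟩ ⟨δ, rfl⟩
      exact ⟨γ * δ, by ext i; simp⟩

/-- The `n`-th symmetric product of a topological space: the quotient of `X^n`
by the full symmetric group, with the quotient topology. -/
def SymmProd (n : ℕ) (X : Type*) [TopologicalSpace X] : Type _ :=
  Quotient (symmSetoid n X)

instance (n : ℕ) (X : Type*) [TopologicalSpace X] : TopologicalSpace (SymmProd n X) :=
  instTopologicalSpaceQuotient

/-- The quotient topology on a projectivization. -/
instance (K V : Type*) [DivisionRing K] [AddCommGroup V] [Module K V]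
    [TopologicalSpace V] : TopologicalSpace (ℙ K V) :=
  instTopologicalSpaceQuotient

/-!
A point `[a : b]` of `ℂP¹` gives the linear polynomial `b X - a`, and `n` points give the
coefficient line of the product of their linear polynomials, a nonzero polynomial of degree at
most `n`. Up to a scalar this product is `∏ (X - a / b)` over the points with `b ≠ 0`, so the
points are recovered from the line: the finite ones as the roots, and `∞ = [1 : 0]` with
multiplicity `n` minus the degree. Over the algebraically closed field `ℂ` every nonzero
polynomial of degree at most `n` arises, so this is a bijection `SPⁿ(ℂP¹) → ℂPⁿ`. It is
continuous because the coefficients are polynomials in homogeneous coordinates, and a continuous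
bijection from a compact space to a Hausdorff space is a homeomorphism.
-/

open Polynomial Topology

lemma Fintype.exists_perm_comp_eq_of_map_univ_eq {ι α : Type*} [Fintype ι] {x y : ι → α}
    (h : Finset.univ.val.map x = Finset.univ.val.map y) : ∃ γ : Equiv.Perm ι, x ∘ γ = y := by
  classical
  have hcard (c : α) : Fintype.card {i // y i = c} = Fintype.card {i // x i = c} := by
    have := congrArg (Multiset.count c) h.symm
    simp only [Multiset.count_map, eq_comm (a := c), ← Finset.filter_val] at this
    simpa only [Fintype.card_subtype, Finset.card_def] using this
  exact ⟨Equiv.ofFiberEquiv fun c => Fintype.equivOfCardEq (hcard c),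
    funext (Equiv.ofFiberEquiv_map _)⟩

lemma Multiset.exists_map_univ_eq {α : Type*} {n : ℕ} {m : Multiset α} (hm : card m = n) :
    ∃ x : Fin n → α, Finset.univ.val.map x = m := by
  obtain ⟨l, rfl⟩ : ∃ l : List α, (l : Multiset α) = m := Quotient.exists_rep m
  obtain rfl : l.length = n := hm
  exact ⟨l.get, by rw [Fin.univ_val_map, List.ofFn_get]⟩

namespace SymmProd

variable (n : ℕ) (X : Type*) [TopologicalSpace X]

def toSym : SymmProd n X → Sym X n :=
  Quotient.lift (fun x => ⟨Finset.univ.val.map x, by simp⟩) <| by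
    rintro x y ⟨γ, rfl⟩
    refine Subtype.ext (?_ : Finset.univ.val.map x = Finset.univ.val.map (x ∘ γ))
    rw [← Multiset.map_map, Multiset.map_univ_val_equiv]

lemma toSym_bijective : Function.Bijective (toSym n X) := by
  refine ⟨fun a b hab => ?_, fun s => ?_⟩
  · induction a using Quotient.ind
    induction b using Quotient.ind
    exact Quotient.sound (Fintype.exists_perm_comp_eq_of_map_univ_eq (congrArg Subtype.val hab))
  · obtain ⟨x, hx⟩ := Multiset.exists_map_univ_eq s.2
    exact ⟨Quotient.mk _ x, Subtype.ext hx⟩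

lemma isQuotientMap_mk : IsQuotientMap (Y := SymmProd n X) (Quotient.mk (symmSetoid n X)) :=
  isQuotientMap_quotient_mk'

instance compactSpace [CompactSpace X] : CompactSpace (SymmProd n X) :=
  Quotient.compactSpace

end SymmProd

namespace Projectivization

section

variable {K V : Type*} [DivisionRing K] [AddCommGroup V] [Module K V] [TopologicalSpace V]

lemma isQuotientMap_mk' : IsQuotientMap (mk' K : {v : V // v ≠ 0} → ℙ K V) :=
  isQuotientMap_quotient_mk'

lemma isOpenQuotientMap_mk' [ContinuousConstSMul K V] :
    IsOpenQuotientMap (mk' K : {v : V // v ≠ 0} → ℙ K V) := by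
  refine ⟨isQuotientMap_mk'.surjective, isQuotientMap_mk'.continuous, fun U hU => ?_⟩
  obtain ⟨W, hW, rfl⟩ := isOpen_induced_iff.mp hU
  have : mk' K ⁻¹' (mk' K '' (Subtype.val ⁻¹' W)) =
      Subtype.val ⁻¹' ⋃ a : Kˣ, (a • ·) ⁻¹' W := by
    ext v
    simp only [Set.mem_preimage, Set.mem_image, Set.mem_iUnion, mk'_eq_mk]
    constructor
    · rintro ⟨w, hw, hwv⟩
      obtain ⟨a, ha⟩ := (mk_eq_mk_iff K _ _ w.2 v.2).mp hwv
      exact ⟨a, ha ▸ hw⟩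
    · rintro ⟨a, ha⟩
      refine ⟨⟨a • v.1, (smul_ne_zero_iff_ne a).mpr v.2⟩, ha, ?_⟩
      exact (mk_eq_mk_iff K _ _ _ v.2).mpr ⟨a, rfl⟩
  rw [← isQuotientMap_mk'.isOpen_preimage, this]
  exact (isOpen_iUnion fun a => hW.preimage (continuous_const_smul a)).preimage
    continuous_subtype_val

end

lemma mk_eq_mk_iff_mul_eq_mul {K ι : Type*} [Field K] {v w : ι → K} (hv : v ≠ 0)
    (hw : w ≠ 0) : mk K v hv = mk K w hw ↔ ∀ i j, v i * w j = v j * w i := by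
  rw [mk_eq_mk_iff']
  constructor
  · rintro ⟨a, rfl⟩ i j
    simp only [Pi.smul_apply, smul_eq_mul]
    ring
  · intro h
    obtain ⟨i, hi⟩ := Function.ne_iff.mp hw
    refine ⟨v i / w i, funext fun j => ?_⟩
    simp only [Pi.smul_apply, smul_eq_mul, Pi.zero_apply] at hi ⊢
    field_simp
    linear_combination h i j

instance t2Space {K ι : Type*} [Field K] [TopologicalSpace K] [ContinuousMul K] [T2Space K] :
    T2Space (ℙ K (ι → K)) := by
  rw [t2Space_iff_of_isOpenQuotientMap isOpenQuotientMap_mk']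
  simp only [mk'_eq_mk, mk_eq_mk_iff_mul_eq_mul, Set.ofPred_forall]
  have hcoord (i : ι) : Continuous fun v : {v : ι → K // v ≠ 0} => v.1 i :=
    (continuous_apply i).comp continuous_subtype_val
  refine isClosed_iInter fun i => isClosed_iInter fun j => isClosed_eq ?_ ?_
  · exact ((hcoord i).comp continuous_fst).mul ((hcoord j).comp continuous_snd)
  · exact ((hcoord j).comp continuous_fst).mul ((hcoord i).comp continuous_snd)

instance compactSpace {𝕜 V : Type*} [RCLike 𝕜] [NormedAddCommGroup V] [NormedSpace 𝕜 V]
    [ProperSpace V] : CompactSpace (ℙ 𝕜 V) := by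
  refine Function.Surjective.compactSpace (f := fun v : Metric.sphere (0 : V) 1 =>
    mk 𝕜 v.1 (ne_zero_of_mem_unit_sphere v)) ?_ ?_
  · exact isQuotientMap_mk'.continuous.comp (continuous_subtype_val.subtype_mk _)
  · intro x
    induction x using ind with | h v hv =>
    exact ⟨⟨(‖v‖⁻¹ : 𝕜) • v, by simp [norm_smul, hv]⟩,
      (mk_eq_mk_iff' 𝕜 _ _ _ hv).mpr ⟨_, rfl⟩⟩

end Projectivization

section BinaryForms

open Projectivization
open OnePoint (equivProjectivization)
open scoped OnePoint

/-- With the convention of `OnePoint.equivProjectivization`, `[t : 1]` is the root `t` of this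
factor, and `∞ = [1 : 0]` gives a nonzero constant. -/
def linearFactor {R : Type*} [CommRing R] (v : Fin 2 → R) : R[X] := C (v 1) * X - C (v 0)

lemma linearFactor_smul {R : Type*} [CommRing R] (a : R) (v : Fin 2 → R) :
    linearFactor (a • v) = C a * linearFactor v := by
  simp only [linearFactor, Pi.smul_apply, smul_eq_mul, C_mul]
  ring

lemma linearFactor_map {R S : Type*} [CommRing R] [CommRing S] (f : R →+* S) (v : Fin 2 → R) :
    (linearFactor v).map f = linearFactor (f ∘ v) := by
  simp [linearFactor]

variable {K : Type*} [Field K]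

lemma associated_linearFactor_rep_mk (v : Fin 2 → K) (hv : v ≠ 0) :
    Associated (linearFactor (mk K v hv).rep) (linearFactor v) := by
  obtain ⟨a, ha⟩ := exists_smul_eq_mk_rep K v hv
  rw [← ha, Units.smul_def, linearFactor_smul]
  exact associated_unit_mul_left _ _ (isUnit_C.mpr a.isUnit)

def polyOfPoints (m : Multiset (ℙ K (Fin 2 → K))) : K[X] :=
  (m.map fun x => linearFactor x.rep).prod

lemma polyOfPoints_add (m m' : Multiset (ℙ K (Fin 2 → K))) :
    polyOfPoints (m + m') = polyOfPoints m * polyOfPoints m' := by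
  simp [polyOfPoints]

section

variable [DecidableEq K]

lemma associated_linearFactor_rep_coe (t : K) :
    Associated (linearFactor (equivProjectivization K t).rep) (X - C t) := by
  rw [OnePoint.equivProjectivization_apply_coe]
  refine (associated_linearFactor_rep_mk _ _).trans ?_
  simp [linearFactor]

lemma associated_linearFactor_rep_infty :
    Associated (linearFactor (equivProjectivization K ∞).rep) 1 := by
  rw [OnePoint.equivProjectivization_apply_infinity]
  refine (associated_linearFactor_rep_mk _ _).trans ?_
  simp [linearFactor]

lemma associated_polyOfPoints_map_add_replicate (s : Multiset K) (k : ℕ) :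
    Associated
      (polyOfPoints (s.map (fun t : K => equivProjectivization K t) +
        Multiset.replicate k (equivProjectivization K ∞)))
      (s.map (X - C ·)).prod := by
  rw [polyOfPoints_add, ← mul_one (s.map _).prod]
  refine Associated.mul_mul ?_ ?_
  · rw [polyOfPoints, Multiset.map_map]
    exact Multiset.prod_hom_rel _ (Associated.refl 1) fun t _ _ h =>
      (associated_linearFactor_rep_coe t).mul_mul h
  · rw [polyOfPoints, Multiset.map_replicate, Multiset.prod_replicate, ← one_pow k]
    exact associated_linearFactor_rep_infty.pow_pow

lemma exists_eq_map_add_replicate (m : Multiset (ℙ K (Fin 2 → K))) :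
    ∃ (s : Multiset K) (k : ℕ),
      m = s.map (fun t : K => equivProjectivization K t) +
        Multiset.replicate k (equivProjectivization K ∞) := by
  induction m using Multiset.induction_on with
  | empty => exact ⟨0, 0, by simp⟩
  | cons x m ih =>
    obtain ⟨s, k, rfl⟩ := ih
    obtain ⟨p, rfl⟩ := (equivProjectivization K).surjective x
    induction p using OnePoint.rec with
    | infty => exact ⟨s, k + 1, by simp [Multiset.replicate_succ]⟩
    | coe t => exact ⟨t ::ₘ s, k, by simp⟩

end

lemma polyOfPoints_ne_zero (m : Multiset (ℙ K (Fin 2 → K))) : polyOfPoints m ≠ 0 := by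
  classical
  obtain ⟨s, k, rfl⟩ := exists_eq_map_add_replicate m
  exact (associated_polyOfPoints_map_add_replicate s k).ne_zero_iff.mpr
    (monic_multiset_prod_of_monic _ _ fun t _ => monic_X_sub_C t).ne_zero

lemma natDegree_polyOfPoints_le (m : Multiset (ℙ K (Fin 2 → K))) :
    (polyOfPoints m).natDegree ≤ Multiset.card m := by
  classical
  obtain ⟨s, k, rfl⟩ := exists_eq_map_add_replicate m
  rw [natDegree_eq_of_degree_eq
    (degree_eq_degree_of_associated (associated_polyOfPoints_map_add_replicate s k)),
    natDegree_multiset_prod_X_sub_C_eq_card]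
  simp

lemma eq_of_associated_polyOfPoints {m m' : Multiset (ℙ K (Fin 2 → K))}
    (hcard : Multiset.card m = Multiset.card m')
    (h : Associated (polyOfPoints m) (polyOfPoints m')) : m = m' := by
  classical
  obtain ⟨s, k, rfl⟩ := exists_eq_map_add_replicate m
  obtain ⟨s', k', rfl⟩ := exists_eq_map_add_replicate m'
  obtain rfl : s = s' := by
    simpa [roots_multiset_prod_X_sub_C] using
      ((associated_polyOfPoints_map_add_replicate s k).symm.trans
        (h.trans (associated_polyOfPoints_map_add_replicate s' k'))).roots_eq
  obtain rfl : k = k' := by simpa using hcard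
  rfl

lemma exists_associated_polyOfPoints [IsAlgClosed K] {p : K[X]} (hp : p ≠ 0) {n : ℕ}
    (hn : p.natDegree ≤ n) :
    ∃ m : Multiset (ℙ K (Fin 2 → K)),
      Multiset.card m = n ∧ Associated (polyOfPoints m) p := by
  classical
  refine ⟨p.roots.map (fun t : K => equivProjectivization K t) +
    Multiset.replicate (n - p.natDegree) (equivProjectivization K ∞), ?_,
    (associated_polyOfPoints_map_add_replicate _ _).trans ?_⟩
  · simp only [Multiset.card_add, Multiset.card_map, Multiset.card_replicate,
      IsAlgClosed.card_roots_eq_natDegree]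
    omega
  · conv_rhs => rw [← C_leadingCoeff_mul_prod_multiset_X_sub_C (p := p)
      IsAlgClosed.card_roots_eq_natDegree]
    exact (associated_unit_mul_left _ _
      (isUnit_C.mpr (leadingCoeff_ne_zero.mpr hp).isUnit)).symm

def coeffVec (n : ℕ) (p : K[X]) : Fin (n + 1) → K := fun j => p.coeff j

lemma coeffVec_C_mul (n : ℕ) (a : K) (p : K[X]) : coeffVec n (C a * p) = a • coeffVec n p := by
  ext j
  simp [coeffVec]

lemma eq_of_coeffVec_eq {n : ℕ} {p q : K[X]} (hp : p.natDegree ≤ n) (hq : q.natDegree ≤ n)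
    (h : coeffVec n p = coeffVec n q) : p = q := by
  ext i
  rcases le_or_gt i n with hi | hi
  · exact congrFun h ⟨i, Nat.lt_succ_of_le hi⟩
  · rw [coeff_eq_zero_of_natDegree_lt (hp.trans_lt hi),
      coeff_eq_zero_of_natDegree_lt (hq.trans_lt hi)]

lemma coeffVec_ne_zero {n : ℕ} {p : K[X]} (hp : p ≠ 0) (hn : p.natDegree ≤ n) :
    coeffVec n p ≠ 0 := fun h =>
  leadingCoeff_ne_zero.mpr hp (congrFun h ⟨p.natDegree, Nat.lt_succ_of_le hn⟩)

lemma mk_coeffVec_eq_mk_coeffVec_iff {n : ℕ} {p q : K[X]} (hp : p ≠ 0) (hpn : p.natDegree ≤ n)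
    (hq : q ≠ 0) (hqn : q.natDegree ≤ n) :
    mk K (coeffVec n p) (coeffVec_ne_zero hp hpn) =
      mk K (coeffVec n q) (coeffVec_ne_zero hq hqn) ↔ Associated p q := by
  rw [mk_eq_mk_iff]
  constructor
  · rintro ⟨a, ha⟩
    rw [Units.smul_def, ← coeffVec_C_mul] at ha
    have hqa : (C (a : K) * q).natDegree ≤ n := (natDegree_C_mul_le _ _).trans hqn
    rw [← eq_of_coeffVec_eq hqa hpn ha]
    exact associated_unit_mul_left _ _ (isUnit_C.mpr a.isUnit)
  · rintro ⟨u, rfl⟩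
    obtain ⟨a, ha, hau⟩ := isUnit_iff.mp u.isUnit
    refine ⟨ha.unit⁻¹, ?_⟩
    rw [← hau, mul_comm, coeffVec_C_mul, Units.smul_def, smul_smul, IsUnit.val_inv_mul, one_smul]

lemma natDegree_polyOfPoints_sym_le {n : ℕ} (s : Sym (ℙ K (Fin 2 → K)) n) :
    (polyOfPoints (s : Multiset (ℙ K (Fin 2 → K)))).natDegree ≤ n :=
  (natDegree_polyOfPoints_le _).trans_eq s.2

def symToProj (n : ℕ) (s : Sym (ℙ K (Fin 2 → K)) n) : ℙ K (Fin (n + 1) → K) :=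
  mk K (coeffVec n (polyOfPoints s))
    (coeffVec_ne_zero (polyOfPoints_ne_zero _) (natDegree_polyOfPoints_sym_le s))

lemma symToProj_eq_mk_of_associated {n : ℕ} (s : Sym (ℙ K (Fin 2 → K)) n) {p : K[X]}
    (hp : p ≠ 0) (hpn : p.natDegree ≤ n)
    (h : Associated (polyOfPoints (s : Multiset (ℙ K (Fin 2 → K)))) p) :
    symToProj n s = mk K (coeffVec n p) (coeffVec_ne_zero hp hpn) :=
  (mk_coeffVec_eq_mk_coeffVec_iff (polyOfPoints_ne_zero _) (natDegree_polyOfPoints_sym_le s)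
    hp hpn).mpr h

lemma symToProj_injective (n : ℕ) : Function.Injective (symToProj (K := K) n) := fun s s' h =>
  Sym.coe_injective <| eq_of_associated_polyOfPoints (s.2.trans s'.2.symm) <|
    (mk_coeffVec_eq_mk_coeffVec_iff (polyOfPoints_ne_zero _) (natDegree_polyOfPoints_sym_le s)
      (polyOfPoints_ne_zero _) (natDegree_polyOfPoints_sym_le s')).mp h

lemma symToProj_surjective [IsAlgClosed K] (n : ℕ) :
    Function.Surjective (symToProj (K := K) n) := by
  intro x
  induction x using ind with | h w hw =>
  let p : K[X] := ∑ j : Fin (n + 1), monomial j (w j)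
  have hpw : coeffVec n p = w := (degreeLTEquiv K (n + 1)).apply_symm_apply w
  have hpn : p.natDegree ≤ n :=
    natDegree_sum_le_of_forall_le _ _ fun j _ => (natDegree_monomial_le _).trans (Fin.is_le j)
  have hp : p ≠ 0 := fun h => hw (by rw [← hpw, h]; rfl)
  obtain ⟨m, hm, hmp⟩ := exists_associated_polyOfPoints hp hpn
  refine ⟨⟨m, hm⟩, ?_⟩
  simp only [← hpw]
  exact symToProj_eq_mk_of_associated _ hp hpn hmp

lemma continuous_coeff_prod_linearFactor {R ι : Type*} [CommRing R] [TopologicalSpace R]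
    [IsTopologicalRing R] [Fintype ι] (j : ℕ) :
    Continuous fun v : ι → Fin 2 → R => (∏ i, linearFactor (v i)).coeff j := by
  let P : (MvPolynomial (ι × Fin 2) R)[X] := ∏ i, linearFactor fun k => MvPolynomial.X (i, k)
  have hP (v : ι → Fin 2 → R) :
      ∏ i, linearFactor (v i) = P.map (MvPolynomial.eval fun q => v q.1 q.2) := by
    simp only [P, Polynomial.map_prod, linearFactor_map, Function.comp_def, MvPolynomial.eval_X]
  simp_rw [hP, coeff_map]
  exact (MvPolynomial.continuous_eval _).comp (by fun_prop)

lemma associated_polyOfPoints_map_univ {ι : Type*} [Fintype ι]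
    (v : ι → {v : Fin 2 → K // v ≠ 0}) :
    Associated (polyOfPoints (Finset.univ.val.map fun i => mk' K (v i)))
      (∏ i, linearFactor (v i).1) := by
  rw [polyOfPoints, Multiset.map_map, ← Finset.prod_eq_multiset_prod]
  exact Associated.prod _ _ _ fun i _ => associated_linearFactor_rep_mk _ (v i).2

lemma continuous_symToProj_toSym [TopologicalSpace K] [IsTopologicalRing K] (n : ℕ) :
    Continuous fun x : SymmProd n (ℙ K (Fin 2 → K)) => symToProj n (SymmProd.toSym n _ x) := by
  -- A product of quotient maps is a quotient map here because `mk'` is also open.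
  have hq : IsOpenQuotientMap (Pi.map fun _ : Fin n => mk' K) :=
    IsOpenQuotientMap.piMap fun _ => isOpenQuotientMap_mk' (V := Fin 2 → K)
  rw [(SymmProd.isQuotientMap_mk n _).continuous_iff, ← hq.continuous_comp_iff]
  let P (v : Fin n → {v : Fin 2 → K // v ≠ 0}) : K[X] := ∏ i, linearFactor (v i).1
  have hP (v) : Associated _ (P v) := associated_polyOfPoints_map_univ v
  have hP0 (v) : P v ≠ 0 := (hP v).ne_zero_iff.mp (polyOfPoints_ne_zero _)
  have hPn (v) : (P v).natDegree ≤ n := by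
    rw [← natDegree_eq_of_degree_eq (degree_eq_degree_of_associated (hP v))]
    exact (natDegree_polyOfPoints_le _).trans_eq (by simp)
  have hcoeff : Continuous fun v => coeffVec n (P v) := continuous_pi fun j =>
    (continuous_coeff_prod_linearFactor j).comp
      (by fun_prop : Continuous fun (v : Fin n → {v : Fin 2 → K // v ≠ 0}) i => (v i).1)
  have hcomp : ((fun x => symToProj n (SymmProd.toSym n _ x)) ∘ Quotient.mk _) ∘
      Pi.map (fun _ => mk' K) =
      fun v => mk' K ⟨coeffVec n (P v), coeffVec_ne_zero (hP0 v) (hPn v)⟩ := by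
    funext v
    change symToProj n (SymmProd.toSym n _ (Quotient.mk _ fun i => mk' K (v i))) = _
    exact symToProj_eq_mk_of_associated _ (hP0 v) (hPn v) (hP v)
  rw [hcomp]
  exact isQuotientMap_mk'.continuous.comp (hcoeff.subtype_mk _)

end BinaryForms

/-- The `n`-th symmetric product of the complex projective line is homeomorphic
to the `n`-dimensional complex projective space. -/
theorem symmProd_CP1_homeomorph_CPn (n : ℕ) :
    Nonempty (SymmProd n (ℙ ℂ (Fin 2 → ℂ)) ≃ₜ ℙ ℂ (Fin (n + 1) → ℂ)) :=
  ⟨(continuous_symToProj_toSym n).homeoOfEquivCompactToT2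
    (f := Equiv.ofBijective _
      (.comp ⟨symToProj_injective n, symToProj_surjective n⟩ (SymmProd.toSym_bijective n _)))⟩
end
end

section
/- Let X be a compact Hausdorff space and τ : X → X a continuous involution (τ ∘ τ = id) without fixed points. Let SP²(X) = X²/S₂ be the second symmetric product and let τ' : SP²(X) → SP²(X) be the involution induced by τ (sending the class of (x,y) to the class of (τ(x),τ(y))). Then the fixed point set {p ∈ SP²(X) : τ'(p) = p}, with the subspace topology, is homeomorphic to the orbit space X/τ (the quotient of X by the equivalence relation identifying x with τ(x)). -/
noncomputable section

/-- The map induced on the `n`-th symmetric product by a map. -/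
def SymmProd.map (n : ℕ) {X Y : Type*} [TopologicalSpace X] [TopologicalSpace Y]
    (f : X → Y) : SymmProd n X → SymmProd n Y :=
  Quotient.map (fun x => f ∘ x) (by rintro x y ⟨γ, rfl⟩; exact ⟨γ, rfl⟩)

/-- The orbit setoid of an involution `τ` on `X`, identifying `x` with `τ x`. -/
def orbitSetoid {X : Type*} (τ : X → X) (hτ : τ ∘ τ = id) : Setoid X where
  r x y := x = y ∨ τ x = y
  iseqv := by
    constructor
    · intro x; exact Or.inl rfl
    · rintro x y (rfl | rfl)
      · exact Or.inl rfl
      · exact Or.inr (congrFun hτ x)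
    · rintro x y z (rfl | rfl) (rfl | rfl)
      · exact Or.inl rfl
      · exact Or.inr rfl
      · exact Or.inr rfl
      · exact Or.inl (congrFun hτ x).symm

/-!
The map `x ↦ {x, τ x}` from `X` to the fixed point set of the induced involution is continuous,
and its fibres are exactly the `τ`-orbits. Since `τ` has no fixed points, a fixed pair `{a, b}`
must have `b = τ a`, so the map is onto. It is also open: the image of `U` is the trace on the
fixed set of the image of `U × X` in `SP²(X)`, and the quotient map `X² → SP²(X)` is open,
the saturation of an open set being a union of coordinate permutations of it. Hence it is a
quotient map, and it induces the homeomorphism `X/τ ≃ₜ Fix`.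
-/

namespace SymmProd

variable {X : Type*} [TopologicalSpace X]

def mk (n : ℕ) (x : Fin n → X) : SymmProd n X := Quotient.mk (symmSetoid n X) x

theorem mk_eq_mk_iff {n : ℕ} {x y : Fin n → X} :
    mk n x = mk n y ↔ ∃ γ : Equiv.Perm (Fin n), x ∘ γ = y :=
  Quotient.eq

theorem map_mk {n : ℕ} {Y : Type*} [TopologicalSpace Y] (f : X → Y) (x : Fin n → X) :
    map n f (mk n x) = mk n (f ∘ x) :=
  rfl

theorem surjective_mk (n : ℕ) : Function.Surjective (mk n : (Fin n → X) → SymmProd n X) :=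
  Quotient.mk_surjective

theorem continuous_mk (n : ℕ) : Continuous (mk n : (Fin n → X) → SymmProd n X) :=
  continuous_quot_mk

theorem isOpenMap_mk (n : ℕ) : IsOpenMap (mk n : (Fin n → X) → SymmProd n X) := by
  intro U hU
  have saturation : mk n ⁻¹' (mk n '' U) = ⋃ γ : Equiv.Perm (Fin n), (· ∘ γ) ⁻¹' U := by
    ext y
    simp only [Set.mem_preimage, Set.mem_image, Set.mem_iUnion, mk_eq_mk_iff]
    constructor
    · rintro ⟨x, hx, γ, rfl⟩
      exact ⟨γ⁻¹, by simpa [Function.comp_assoc] using hx⟩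
    · rintro ⟨γ, hy⟩
      exact ⟨y ∘ γ, hy, γ⁻¹, by ext; simp⟩
  refine isQuotientMap_quot_mk.isOpen_preimage.mp ?_
  change IsOpen (mk n ⁻¹' (mk n '' U))
  rw [saturation]
  exact isOpen_iUnion fun γ => hU.preimage (continuous_pi fun i => continuous_apply (γ i))

theorem mk_pair_eq_mk_pair_iff {a b c d : X} :
    mk 2 ![a, b] = mk 2 ![c, d] ↔ a = c ∧ b = d ∨ a = d ∧ b = c := by
  have perm_fin_two : ∀ γ : Equiv.Perm (Fin 2), γ = 1 ∨ γ = Equiv.swap 0 1 := by decide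
  rw [mk_eq_mk_iff]
  constructor
  · rintro ⟨γ, h⟩
    have h0 := congrFun h 0
    have h1 := congrFun h 1
    rcases perm_fin_two γ with rfl | rfl <;> simp_all
  · rintro (⟨rfl, rfl⟩ | ⟨rfl, rfl⟩)
    · exact ⟨1, rfl⟩
    · exact ⟨Equiv.swap 0 1, by ext i; fin_cases i <;> rfl⟩

theorem map_mk_pair {Y : Type*} [TopologicalSpace Y] (f : X → Y) (a b : X) :
    map 2 f (mk 2 ![a, b]) = mk 2 ![f a, f b] := by
  rw [map_mk]
  congr 1
  ext i
  fin_cases i <;> rfl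

variable {τ : X → X}

def orbitPair (hτ : Function.Involutive τ) (x : X) : {p : SymmProd 2 X // map 2 τ p = p} :=
  ⟨mk 2 ![x, τ x], by rw [map_mk_pair, hτ, mk_pair_eq_mk_pair_iff]; exact Or.inr ⟨rfl, rfl⟩⟩

variable (hτ : Function.Involutive τ)

theorem orbitPair_eq_orbitPair_iff {x y : X} :
    orbitPair hτ x = orbitPair hτ y ↔ x = y ∨ τ x = y := by
  rw [orbitPair, orbitPair, Subtype.mk.injEq, mk_pair_eq_mk_pair_iff]
  constructor
  · rintro (⟨h, -⟩ | ⟨h, -⟩)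
    · exact Or.inl h
    · exact Or.inr (by rw [h, hτ])
  · rintro (rfl | rfl)
    · exact Or.inl ⟨rfl, rfl⟩
    · exact Or.inr ⟨(hτ x).symm, rfl⟩

theorem continuous_orbitPair (hcont : Continuous τ) : Continuous (orbitPair hτ) :=
  ((continuous_mk 2).comp (continuous_pi fun i => by
    fin_cases i
    exacts [continuous_id, hcont])).subtype_mk _

theorem orbitPair_eq_of_map_mk_pair_eq (hfree : ∀ x, τ x ≠ x) {a b : X}
    (h : map 2 τ (mk 2 ![a, b]) = mk 2 ![a, b]) : orbitPair hτ a = ⟨mk 2 ![a, b], h⟩ := by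
  have hb : τ a = b := by
    rw [map_mk_pair, mk_pair_eq_mk_pair_iff] at h
    rcases h with ⟨h, -⟩ | ⟨h, -⟩
    exacts [absurd h (hfree a), h]
  exact Subtype.ext (congrArg (fun b => mk 2 ![a, b]) hb)

theorem image_orbitPair (hfree : ∀ x, τ x ≠ x) (U : Set X) :
    orbitPair hτ '' U = Subtype.val ⁻¹' (mk 2 '' {f | f 0 ∈ U}) := by
  ext ⟨p, hp⟩
  constructor
  · rintro ⟨x, hx, h⟩
    exact ⟨![x, τ x], hx, congrArg Subtype.val h⟩
  · rintro ⟨f, hf, rfl⟩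
    obtain ⟨a, b, rfl⟩ : ∃ a b, f = ![a, b] := ⟨f 0, f 1, (FinVec.etaExpand_eq f).symm⟩
    exact ⟨a, hf, orbitPair_eq_of_map_mk_pair_eq hτ hfree hp⟩

theorem isOpenMap_orbitPair (hfree : ∀ x, τ x ≠ x) : IsOpenMap (orbitPair hτ) := by
  intro U hU
  rw [image_orbitPair hτ hfree]
  exact (isOpenMap_mk 2 _ (hU.preimage (continuous_apply 0))).preimage continuous_subtype_val

theorem surjective_orbitPair (hfree : ∀ x, τ x ≠ x) : Function.Surjective (orbitPair hτ) := by
  rw [← Set.range_eq_univ, ← Set.image_univ, image_orbitPair hτ hfree]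
  simp only [Set.mem_univ, Set.ofPred_true, Set.image_univ_of_surjective (surjective_mk 2),
    Set.preimage_univ]

end SymmProd

theorem fixedPoints_SP2_homeomorph_orbitSpace_general
    (X : Type) [TopologicalSpace X]
    (τ : X → X) (hcont : Continuous τ) (hτ : τ ∘ τ = id) (hfree : ∀ x, τ x ≠ x) :
    Nonempty ({p : SymmProd 2 X // SymmProd.map 2 τ p = p} ≃ₜ
      Quotient (orbitSetoid τ hτ)) := by
  have hinv : Function.Involutive τ := congrFun hτ
  have hcont' : Continuous (SymmProd.orbitPair hinv) := SymmProd.continuous_orbitPair hinv hcont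
  have hquot : Topology.IsQuotientMap (SymmProd.orbitPair hinv) :=
    (SymmProd.isOpenMap_orbitPair hinv hfree).isQuotientMap hcont'
      (SymmProd.surjective_orbitPair hinv hfree)
  have hker : Setoid.ker (SymmProd.orbitPair hinv) = orbitSetoid τ hτ :=
    Setoid.ext fun _ _ => SymmProd.orbitPair_eq_orbitPair_iff hinv
  rw [← hker]
  exact ⟨(hquot.homeomorph (f := ⟨_, hcont'⟩)).symm⟩

/-- Let `X` be a compact Hausdorff space with a continuous fixed-point-free
involution `τ`. The fixed point set of the induced involution of the second
symmetric product `SP²(X)` is homeomorphic to the orbit space `X/τ`. -/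
theorem fixedPoints_SP2_homeomorph_orbitSpace
    (X : Type) [TopologicalSpace X] [CompactSpace X] [T2Space X]
    (τ : X → X) (hcont : Continuous τ) (hτ : τ ∘ τ = id) (hfree : ∀ x, τ x ≠ x) :
    Nonempty ({p : SymmProd 2 X // SymmProd.map 2 τ p = p} ≃ₜ
      Quotient (orbitSetoid τ hτ)) :=
  fixedPoints_SP2_homeomorph_orbitSpace_general X τ hcont hτ hfree

end
end

section
/- Let V and W be finite-dimensional vector spaces over the field 𝔽₂ with two elements, and let σ : V → V and τ : W → W be linear involutions (σ² = id, τ² = id). For a linear involution ρ of a finite-dimensional 𝔽₂-vector space, set t(ρ) = finrank(ker(id + ρ)) − finrank(range(id + ρ)). Then for the involution σ ⊗ τ of V ⊗ W one has t(σ ⊗ τ) = t(σ) · t(τ). -/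
/-!
Over `𝔽₂` the map `id + ρ` squares to zero, so `t(ρ) + 2 · rank(id + ρ) = dim V`; in this form
`t` is visibly additive on products and invariant under conjugation.

An involution `σ` is conjugate, via `(t, c, d) ↦ t + c + σ d`, to `id × swap` on `T × (C × C)`,
where `C` is a complement of `ker(id + σ)` and `T` a complement of `range(id + σ)` inside
`ker(id + σ)`; so `t(σ) = dim T`. The twisted swaps `(x, y) ↦ (θ y, θ x)`, `θ` an involution,
have `t = 0` (the range of `id +` such a map is the graph of `θ`), and they are stable under
`- ⊗ τ`, with `θ` replaced by `θ ⊗ τ`. Since `id_T ⊗ -` multiplies ranks by `dim T`,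
`t(σ ⊗ τ) = t(id_T ⊗ τ) = dim T · t(τ) = t(σ) · t(τ)`.
-/

open TensorProduct

noncomputable section

/-- The number of trivial summands of a linear involution `ρ` of an `𝔽₂`-vector
space: `t(ρ) = dim ker(id + ρ) - dim range(id + ρ)`. -/
def trivCount {V : Type} [AddCommGroup V] [Module (ZMod 2) V]
    (ρ : V →ₗ[ZMod 2] V) : ℕ :=
  Module.finrank (ZMod 2) (LinearMap.ker (LinearMap.id + ρ)) -
    Module.finrank (ZMod 2) (LinearMap.range (LinearMap.id + ρ))

open LinearMap Module

theorem Submodule.finrank_prod {K V W : Type*} [DivisionRing K] [AddCommGroup V] [Module K V]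
    [AddCommGroup W] [Module K W] [FiniteDimensional K V] [FiniteDimensional K W]
    (p : Submodule K V) (q : Submodule K W) :
    finrank K (p.prod q) = finrank K p + finrank K q := by
  have := finrank_range_of_inj (f := p.subtype.prodMap q.subtype)
    (p.injective_subtype.prodMap q.injective_subtype)
  rwa [range_prodMap, p.range_subtype, q.range_subtype, Module.finrank_prod] at this

theorem LinearMap.finrank_range_lTensor {K V W W' : Type*} [Field K] [AddCommGroup V]
    [Module K V] [AddCommGroup W] [Module K W] [AddCommGroup W'] [Module K W'] (f : W →ₗ[K] W') :
    finrank K (range (lTensor V f)) = finrank K V * finrank K (range f) := by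
  rw [lTensor_range, finrank_range_of_inj
    (Module.Flat.lTensor_preserves_injective_linearMap _ (Submodule.injective_subtype _)),
    finrank_tensorProduct]

section swapMap

variable {R M : Type*} [Semiring R] [AddCommMonoid M] [Module R M]

def LinearMap.swapMap (θ : M →ₗ[R] M) : M × M →ₗ[R] M × M :=
  (θ ∘ₗ snd R M M).prod (θ ∘ₗ fst R M M)

@[simp]
theorem LinearMap.swapMap_apply (θ : M →ₗ[R] M) (x : M × M) : swapMap θ x = (θ x.2, θ x.1) :=
  rfl

theorem LinearMap.swapMap_comp_swapMap {θ : M →ₗ[R] M} (hθ : θ ∘ₗ θ = LinearMap.id) :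
    swapMap θ ∘ₗ swapMap θ = LinearMap.id := by
  ext x <;> simp [← comp_apply θ θ, hθ]

theorem LinearMap.range_id_add_swapMap {θ : M →ₗ[R] M} (hθ : θ ∘ₗ θ = LinearMap.id) :
    range (LinearMap.id + swapMap θ) = range (LinearMap.id.prod θ) := by
  have hθ' (x : M) : θ (θ x) = x := congr($hθ x)
  apply le_antisymm
  · rintro _ ⟨⟨x, y⟩, rfl⟩
    exact ⟨x + θ y, by simp [hθ', add_comm]⟩
  · rintro _ ⟨u, rfl⟩
    exact ⟨(u, 0), by simp⟩

end swapMap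

section Tensor

variable {R M₁ M₂ N₁ N₂ P₁ P₂ : Type*} [CommSemiring R] [AddCommMonoid M₁] [Module R M₁]
  [AddCommMonoid M₂] [Module R M₂] [AddCommMonoid N₁] [Module R N₁] [AddCommMonoid N₂]
  [Module R N₂] [AddCommMonoid P₁] [Module R P₁] [AddCommMonoid P₂] [Module R P₂]

theorem TensorProduct.prodLeft_comp_map_prodMap (f : M₁ →ₗ[R] N₁) (g : M₂ →ₗ[R] N₂)
    (h : P₁ →ₗ[R] P₂) :
    (prodLeft R R N₁ N₂ P₂).toLinearMap ∘ₗ map (f.prodMap g) h =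
      (map f h).prodMap (map g h) ∘ₗ (prodLeft R R M₁ M₂ P₁).toLinearMap := by
  ext <;> simp

theorem TensorProduct.prodLeft_comp_map_swapMap (θ : M₁ →ₗ[R] M₁) (h : P₁ →ₗ[R] P₁) :
    (prodLeft R R M₁ M₁ P₁).toLinearMap ∘ₗ map (swapMap θ) h =
      swapMap (map θ h) ∘ₗ (prodLeft R R M₁ M₁ P₁).toLinearMap := by
  ext <;> simp

theorem TensorProduct.map_comp_map_eq_id {f : M₁ →ₗ[R] M₁} {g : P₁ →ₗ[R] P₁}
    (hf : f ∘ₗ f = LinearMap.id) (hg : g ∘ₗ g = LinearMap.id) :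
    map f g ∘ₗ map f g = LinearMap.id := by
  rw [← map_comp, hf, hg, map_id]

end Tensor

variable {V W V' : Type} [AddCommGroup V] [Module (ZMod 2) V] [AddCommGroup W] [Module (ZMod 2) W]
  [AddCommGroup V'] [Module (ZMod 2) V']

theorem id_add_comp_id_add_eq_zero {ρ : V →ₗ[ZMod 2] V} (hρ : ρ ∘ₗ ρ = LinearMap.id) :
    (LinearMap.id + ρ) ∘ₗ (LinearMap.id + ρ) = 0 := by
  simp only [comp_add, add_comp, hρ, id_comp, comp_id]
  rw [ZModModule.add_add_add_cancel, ZModModule.add_self]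

theorem trivCount_add_two_mul_finrank_range [FiniteDimensional (ZMod 2) V]
    {ρ : V →ₗ[ZMod 2] V} (hρ : ρ ∘ₗ ρ = LinearMap.id) :
    trivCount ρ + 2 * finrank (ZMod 2) (range (LinearMap.id + ρ)) = finrank (ZMod 2) V := by
  have hle := Submodule.finrank_mono (range_le_ker_iff.mpr (id_add_comp_id_add_eq_zero hρ))
  have := finrank_range_add_finrank_ker (LinearMap.id + ρ)
  unfold trivCount
  omega

theorem trivCount_eq_of_conj (e : V ≃ₗ[ZMod 2] W)
    {ρ : V →ₗ[ZMod 2] V} {ρ' : W →ₗ[ZMod 2] W} (h : e.toLinearMap ∘ₗ ρ = ρ' ∘ₗ e.toLinearMap) :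
    trivCount ρ = trivCount ρ' := by
  have hconj : e.toLinearMap ∘ₗ (LinearMap.id + ρ) = (LinearMap.id + ρ') ∘ₗ e.toLinearMap := by
    rw [comp_add, add_comp, h, comp_id, id_comp]
  have hker := congrArg ker hconj
  have hrange := congrArg range hconj
  rw [LinearEquiv.ker_comp, ker_comp, Submodule.comap_equiv_eq_map_symm] at hker
  rw [range_comp, LinearEquiv.range_comp] at hrange
  unfold trivCount
  rw [hker, ← hrange, LinearEquiv.finrank_map_eq, LinearEquiv.finrank_map_eq]

theorem trivCount_id :
    trivCount (LinearMap.id : V →ₗ[ZMod 2] V) = finrank (ZMod 2) V := by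
  rw [trivCount, ZModModule.add_self, ker_zero, range_zero, finrank_top, finrank_bot,
    Nat.sub_zero]

theorem trivCount_prodMap [FiniteDimensional (ZMod 2) V] [FiniteDimensional (ZMod 2) W]
    {σ : V →ₗ[ZMod 2] V} {τ : W →ₗ[ZMod 2] W} (hσ : σ ∘ₗ σ = LinearMap.id)
    (hτ : τ ∘ₗ τ = LinearMap.id) :
    trivCount (σ.prodMap τ) = trivCount σ + trivCount τ := by
  have hσ' := trivCount_add_two_mul_finrank_range hσ
  have hτ' := trivCount_add_two_mul_finrank_range hτ
  have hστ := trivCount_add_two_mul_finrank_range (ρ := σ.prodMap τ) (by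
    rw [prodMap_comp, hσ, hτ, prodMap_id])
  rw [← prodMap_id, ← prodMap_add, range_prodMap, Submodule.finrank_prod, finrank_prod] at hστ
  omega

theorem trivCount_lTensor [FiniteDimensional (ZMod 2) V] [FiniteDimensional (ZMod 2) W]
    {τ : W →ₗ[ZMod 2] W} (hτ : τ ∘ₗ τ = LinearMap.id) :
    trivCount (lTensor V τ) = finrank (ZMod 2) V * trivCount τ := by
  have hτ' := trivCount_add_two_mul_finrank_range hτ
  have hVτ := trivCount_add_two_mul_finrank_range (ρ := lTensor V τ) (by
    rw [← lTensor_comp, hτ, lTensor_id])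
  rw [← lTensor_id, ← lTensor_add, finrank_range_lTensor, finrank_tensorProduct, ← hτ'] at hVτ
  nlinarith

theorem trivCount_swapMap [FiniteDimensional (ZMod 2) V] {θ : V →ₗ[ZMod 2] V}
    (hθ : θ ∘ₗ θ = LinearMap.id) : trivCount (swapMap θ) = 0 := by
  have h := trivCount_add_two_mul_finrank_range (swapMap_comp_swapMap hθ)
  rw [range_id_add_swapMap hθ, finrank_range_of_inj, finrank_prod] at h
  · omega
  · exact fun x y hxy => congrArg Prod.fst hxy

theorem trivCount_map_prodMap [FiniteDimensional (ZMod 2) V] [FiniteDimensional (ZMod 2) W]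
    [FiniteDimensional (ZMod 2) V']
    {f : V →ₗ[ZMod 2] V} {g : V' →ₗ[ZMod 2] V'} {τ : W →ₗ[ZMod 2] W}
    (hf : f ∘ₗ f = LinearMap.id) (hg : g ∘ₗ g = LinearMap.id) (hτ : τ ∘ₗ τ = LinearMap.id) :
    trivCount (map (f.prodMap g) τ) = trivCount (map f τ) + trivCount (map g τ) := by
  rw [trivCount_eq_of_conj _ (prodLeft_comp_map_prodMap f g τ),
    trivCount_prodMap (map_comp_map_eq_id hf hτ) (map_comp_map_eq_id hg hτ)]

theorem trivCount_map_swapMap [FiniteDimensional (ZMod 2) V] [FiniteDimensional (ZMod 2) W]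
    {θ : V →ₗ[ZMod 2] V} {τ : W →ₗ[ZMod 2] W} (hθ : θ ∘ₗ θ = LinearMap.id)
    (hτ : τ ∘ₗ τ = LinearMap.id) :
    trivCount (map (swapMap θ) τ) = 0 := by
  rw [trivCount_eq_of_conj _ (prodLeft_comp_map_swapMap θ τ),
    trivCount_swapMap (map_comp_map_eq_id hθ hτ)]

theorem trivCount_map_eq_of_conj (e : V ≃ₗ[ZMod 2] V')
    {ρ : V →ₗ[ZMod 2] V} {ρ' : V' →ₗ[ZMod 2] V'} (h : e.toLinearMap ∘ₗ ρ = ρ' ∘ₗ e.toLinearMap)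
    (τ : W →ₗ[ZMod 2] W) :
    trivCount (map ρ τ) = trivCount (map ρ' τ) :=
  trivCount_eq_of_conj (e.rTensor W) <| by
    rw [LinearEquiv.coe_rTensor, rTensor, ← map_comp, ← map_comp, h, id_comp, comp_id]

theorem injective_coprod_subtype {σ : V →ₗ[ZMod 2] V} (hσ : σ ∘ₗ σ = LinearMap.id)
    {T C : Submodule (ZMod 2) V} (hTA : T ≤ ker (LinearMap.id + σ))
    (hT : Disjoint (range (LinearMap.id + σ)) T) (hC : Disjoint (ker (LinearMap.id + σ)) C) :
    Function.Injective (T.subtype.coprod (C.subtype.coprod (σ ∘ₗ C.subtype))) := by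
  set A := LinearMap.id + σ
  have hAσ (v : V) : A (σ v) = A v := by
    simp [A, ← comp_apply σ σ, hσ, add_comm]
  rw [injective_iff_map_eq_zero]
  rintro ⟨⟨t, ht⟩, ⟨c, hc⟩, ⟨d, hd⟩⟩ h0
  replace h0 : t + (c + σ d) = 0 := h0
  have hdc : d = c := by
    have hcd : A (c + d) = 0 := by
      simpa [mem_ker.mp (hTA ht), hAσ] using congrArg A h0
    have := eq_neg_of_add_eq_zero_right (Submodule.disjoint_def.mp hC _ hcd (add_mem hc hd))
    rwa [ZModModule.neg_eq_self] at this
  subst hdc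
  have ht0 : t = 0 := by
    refine Submodule.disjoint_def.mp hT t ⟨d, ?_⟩ ht
    exact ((eq_neg_of_add_eq_zero_left h0).trans (ZModModule.neg_eq_self _)).symm
  have hd0 : d = 0 := by
    refine Submodule.disjoint_def.mp hC d ?_ hd
    simpa [A, ht0] using h0
  simp [ht0, hd0]

theorem exists_linearEquiv_comp_prodMap_swapMap [FiniteDimensional (ZMod 2) V]
    {σ : V →ₗ[ZMod 2] V} (hσ : σ ∘ₗ σ = LinearMap.id) :
    ∃ (T C : Submodule (ZMod 2) V) (e : (T × (C × C)) ≃ₗ[ZMod 2] V),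
      e.toLinearMap ∘ₗ LinearMap.id.prodMap (swapMap LinearMap.id) = σ ∘ₗ e.toLinearMap := by
  set A := LinearMap.id + σ
  have hrange_le : range A ≤ ker A := range_le_ker_iff.mpr (id_add_comp_id_add_eq_zero hσ)
  obtain ⟨C, hC⟩ := (ker A).exists_isCompl
  obtain ⟨T, hT, hTsup⟩ := IsModularLattice.exists_disjoint_and_sup_eq hrange_le
  have hTA : T ≤ ker A := hTsup ▸ le_sup_right
  have hdim : finrank (ZMod 2) (T × (C × C)) = finrank (ZMod 2) V := by
    have hT' := Submodule.finrank_sup_add_finrank_inf_eq (range A) T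
    have hC' := Submodule.finrank_add_eq_of_isCompl hC
    have hA := finrank_range_add_finrank_ker A
    rw [hTsup, hT.eq_bot, finrank_bot] at hT'
    rw [finrank_prod, finrank_prod]
    omega
  refine ⟨T, C, linearEquivOfInjective _
    (injective_coprod_subtype hσ hTA hT hC.disjoint) hdim, ?_⟩
  ext x
  · have hx : (x : V) + σ x = 0 := hTA x.2
    simpa using ((eq_neg_of_add_eq_zero_right hx).trans (ZModModule.neg_eq_self _)).symm
  all_goals simp [← comp_apply σ σ, hσ]

/-- For linear involutions `σ`, `τ` of finite-dimensional `𝔽₂`-vector spaces `V`, `W`,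
one has `t(σ ⊗ τ) = t(σ) · t(τ)`. -/
theorem trivCount_tensor
    (V W : Type) [AddCommGroup V] [Module (ZMod 2) V] [FiniteDimensional (ZMod 2) V]
    [AddCommGroup W] [Module (ZMod 2) W] [FiniteDimensional (ZMod 2) W]
    (σ : V →ₗ[ZMod 2] V) (τ : W →ₗ[ZMod 2] W)
    (hσ : σ ∘ₗ σ = LinearMap.id) (hτ : τ ∘ₗ τ = LinearMap.id) :
    trivCount (TensorProduct.map σ τ) = trivCount σ * trivCount τ := by
  obtain ⟨T, C, e, he⟩ := exists_linearEquiv_comp_prodMap_swapMap hσ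
  have hid {X : Type} [AddCommGroup X] [Module (ZMod 2) X] :
      (LinearMap.id : X →ₗ[ZMod 2] X) ∘ₗ LinearMap.id = LinearMap.id := id_comp _
  have hswap := swapMap_comp_swapMap (hid (X := C))
  have hσT : trivCount σ = finrank (ZMod 2) T := by
    rw [← trivCount_eq_of_conj e he, trivCount_prodMap (hid (X := T)) hswap, trivCount_id,
      trivCount_swapMap (hid (X := C)), add_zero]
  rw [← trivCount_map_eq_of_conj e he τ, trivCount_map_prodMap (hid (X := T)) hswap hτ,
    trivCount_map_swapMap (hid (X := C)) hτ, add_zero, hσT]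
  exact trivCount_lTensor hτ

end
end

section
/- Let X and Y be topological spaces and n a natural number. Then the n-th symmetric product of the disjoint union, SP^n(X ⊔ Y), is homeomorphic to the disjoint union, over all pairs (k,l) of natural numbers with k + l = n, of the product spaces SP^k(X) × SP^l(Y). -/
/-! A point of `SP^n(Z)` is determined by the multiset of its `n` coordinates, and a multiset on
`X ⊕ Y` splits uniquely into a multiset on `X` and one on `Y`, of sizes `k + l = n`. Hence
concatenating tuples, `(x, y) ↦ append (inl ∘ x) (inr ∘ y)`, induces a bijection
`Σ_{k+l=n} SP^k(X) × SP^l(Y) → SP^n(X ⊕ Y)`. Concatenation is an open embedding and quotient maps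
by finite permutation groups are open, so this bijection is continuous and open. -/

noncomputable section

open Finset Topology

theorem exists_perm_comp_eq_iff_map_univ_val_eq {ι Z : Type*} [Fintype ι] {x y : ι → Z} :
    (∃ σ : Equiv.Perm ι, x ∘ σ = y) ↔ univ.val.map x = univ.val.map y := by
  classical
  refine ⟨fun ⟨σ, hσ⟩ => ?_, fun h => ?_⟩
  · rw [← hσ, ← Multiset.map_map, Multiset.map_univ_val_equiv]
  have card_fiber (f : ι → Z) (c : Z) :
      Fintype.card {i // f i = c} = Multiset.count c (univ.val.map f) := by
    rw [Multiset.count_map, Fintype.card_subtype]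
    simp [Finset.card, eq_comm]
  have e (c : Z) : {i // y i = c} ≃ {i // x i = c} :=
    Fintype.equivOfCardEq (by rw [card_fiber, card_fiber, h])
  exact ⟨Equiv.ofFiberEquiv e, funext (Equiv.ofFiberEquiv_map e)⟩

namespace Multiset
variable {α β : Type*}

def toLeft (u : Multiset (α ⊕ β)) : Multiset α := u.filterMap Sum.getLeft?

def toRight (u : Multiset (α ⊕ β)) : Multiset β := u.filterMap Sum.getRight?

theorem filterMap_none (s : Multiset α) : s.filterMap (fun _ => (none : Option β)) = 0 :=
  Quot.inductionOn s fun _ => by simp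

@[simp]
theorem toLeft_disjSum (s : Multiset α) (t : Multiset β) : (s.disjSum t).toLeft = s := by
  simp [toLeft, disjSum, filterMap_add, filterMap_map, Function.comp_def, filterMap_none]

@[simp]
theorem toRight_disjSum (s : Multiset α) (t : Multiset β) : (s.disjSum t).toRight = t := by
  simp [toRight, disjSum, filterMap_add, filterMap_map, Function.comp_def, filterMap_none]

theorem toLeft_disjSum_toRight (u : Multiset (α ⊕ β)) : u.toLeft.disjSum u.toRight = u := by
  induction u using Multiset.induction_on with
  | empty => rfl
  | cons a u ih =>
    cases a <;> simp only [toLeft, toRight, disjSum, filterMap_cons] at ih ⊢ <;> simp [ih]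

end Multiset

theorem IsOpenQuotientMap.sigmaMap {ι κ : Type*} {A : ι → Type*} {B : κ → Type*}
    [∀ i, TopologicalSpace (A i)] [∀ k, TopologicalSpace (B k)] {f : ι → κ}
    (hf : Function.Surjective f) {g : ∀ i, A i → B (f i)} (hg : ∀ i, IsOpenQuotientMap (g i)) :
    IsOpenQuotientMap (Sigma.map f g) :=
  ⟨hf.sigma_map fun i => (hg i).surjective, Continuous.sigma_map fun i => (hg i).continuous,
    isOpenMap_sigma_map.2 fun i => (hg i).isOpenMap⟩

theorem IsOpenQuotientMap.isHomeomorph_of_comp {A B C : Type*} [TopologicalSpace A]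
    [TopologicalSpace B] [TopologicalSpace C] {q : A → B} {f : B → C} (hq : IsOpenQuotientMap q)
    (hcont : Continuous (f ∘ q)) (hopen : IsOpenMap (f ∘ q)) (hf : Function.Bijective f) :
    IsHomeomorph f where
  continuous := hq.isQuotientMap.continuous_iff.2 hcont
  isOpenMap U hU := by
    rw [← Set.image_preimage_eq U hq.surjective, ← Set.image_comp]
    exact hopen _ (hU.preimage hq.continuous)
  bijective := hf

namespace Fin

variable {X Y : Type*} {k l n : ℕ}

def sumAppend (h : k + l = n) (x : Fin k → X) (y : Fin l → Y) : Fin n → X ⊕ Y :=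
  Fin.append (Sum.inl ∘ x) (Sum.inr ∘ y) ∘ Fin.cast h.symm

theorem map_univ_val_sumAppend (h : k + l = n) (x : Fin k → X) (y : Fin l → Y) :
    univ.val.map (sumAppend h x y) = (univ.val.map x).disjSum (univ.val.map y) := by
  subst h
  simp [sumAppend, univ_val_map, Multiset.disjSum, List.map_ofFn]

theorem isOpenEmbedding_sumAppend [TopologicalSpace X] [TopologicalSpace Y] (h : k + l = n) :
    IsOpenEmbedding fun p : (Fin k → X) × (Fin l → Y) => sumAppend h p.1 p.2 := by
  subst h
  have hfactor : (fun p : (Fin k → X) × (Fin l → Y) => sumAppend rfl p.1 p.2) =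
      appendHomeomorph k l ∘ Prod.map (Pi.map fun _ => Sum.inl) (Pi.map fun _ => Sum.inr) :=
    rfl
  rw [hfactor]
  exact (appendHomeomorph k l).isOpenEmbedding.comp
    ((IsOpenEmbedding.piMap fun _ => .inl).prodMap (IsOpenEmbedding.piMap fun _ => .inr))

end Fin

namespace SymmProd

variable {n : ℕ} {X Y Z : Type*} [TopologicalSpace X] [TopologicalSpace Y] [TopologicalSpace Z]

theorem isOpenQuotientMap_mk : IsOpenQuotientMap (Quotient.mk (symmSetoid n Z)) where
  surjective := Quotient.mk_surjective
  continuous := continuous_quot_mk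
  isOpenMap U hU := by
    have hsat : Quotient.mk (symmSetoid n Z) ⁻¹' (Quotient.mk _ '' U) =
        ⋃ σ : Equiv.Perm (Fin n), (· ∘ σ) ⁻¹' U := by
      ext x
      simp only [Set.mem_preimage, Set.mem_image, Set.mem_iUnion, Quotient.eq]
      constructor
      · rintro ⟨u, hu, σ, rfl⟩
        exact ⟨σ⁻¹, by simpa [Function.comp_assoc] using hu⟩
      · rintro ⟨σ, hσ⟩
        exact ⟨x ∘ σ, hσ, σ⁻¹, by simp [Function.comp_assoc]⟩
    rw [isOpen_coinduced]
    change IsOpen (Quotient.mk (symmSetoid n Z) ⁻¹' _)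
    rw [hsat]
    exact isOpen_iUnion fun σ => hU.preimage (continuous_pi fun i => continuous_apply (σ i))

def toMultiset : SymmProd n Z → Multiset Z :=
  Quotient.lift (fun x => univ.val.map x) fun _ _ h => exists_perm_comp_eq_iff_map_univ_val_eq.1 h

@[simp]
theorem toMultiset_mk (x : Fin n → Z) :
    toMultiset (Quotient.mk _ x : SymmProd n Z) = univ.val.map x :=
  rfl

theorem toMultiset_injective : Function.Injective (toMultiset : SymmProd n Z → Multiset Z) := by
  intro p q
  induction p, q using Quotient.inductionOn₂ with
  | h x y => exact fun h => Quotient.sound (exists_perm_comp_eq_iff_map_univ_val_eq.2 h)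

@[simp]
theorem card_toMultiset (p : SymmProd n Z) : Multiset.card p.toMultiset = n := by
  induction p using Quotient.inductionOn with
  | h x => simp

theorem exists_toMultiset_eq {s : Multiset Z} (hs : Multiset.card s = n) :
    ∃ p : SymmProd n Z, p.toMultiset = s := by
  subst hs
  refine ⟨Quotient.mk _ fun i => s.toList.get (i.cast (Multiset.length_toList s).symm), ?_⟩
  rw [toMultiset_mk, Fin.univ_val_map]
  conv_rhs => rw [← Multiset.coe_toList s]
  congr 1
  apply List.ext_getElem <;> simp

def sumAppend :
    (Σ kl : {p : ℕ × ℕ // p.1 + p.2 = n}, SymmProd kl.1.1 X × SymmProd kl.1.2 Y) →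
      SymmProd n (X ⊕ Y) :=
  fun p => Quotient.map₂ (Fin.sumAppend p.1.2) (fun x x' hx y y' hy =>
    exists_perm_comp_eq_iff_map_univ_val_eq.2 <| by
      rw [Fin.map_univ_val_sumAppend, Fin.map_univ_val_sumAppend,
        exists_perm_comp_eq_iff_map_univ_val_eq.1 hx, exists_perm_comp_eq_iff_map_univ_val_eq.1 hy])
    p.2.1 p.2.2

theorem toMultiset_sumAppend
    (p : Σ kl : {p : ℕ × ℕ // p.1 + p.2 = n}, SymmProd kl.1.1 X × SymmProd kl.1.2 Y) :
    (sumAppend p).toMultiset = p.2.1.toMultiset.disjSum p.2.2.toMultiset := by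
  obtain ⟨kl, a, b⟩ := p
  induction a, b using Quotient.inductionOn₂ with
  | h x y => exact Fin.map_univ_val_sumAppend kl.2 x y

theorem sumAppend_injective : Function.Injective (sumAppend : _ → SymmProd n (X ⊕ Y)) := by
  rintro ⟨⟨⟨k, l⟩, h⟩, a, b⟩ ⟨⟨⟨k', l'⟩, h'⟩, a', b'⟩ heq
  have hdisj := congrArg toMultiset heq
  simp only [toMultiset_sumAppend] at hdisj
  have ha := congrArg Multiset.toLeft hdisj
  have hb := congrArg Multiset.toRight hdisj
  simp only [Multiset.toLeft_disjSum, Multiset.toRight_disjSum] at ha hb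
  obtain rfl : k = k' := by simpa using congrArg Multiset.card ha
  obtain rfl : l = l' := by simpa using congrArg Multiset.card hb
  obtain rfl := toMultiset_injective ha
  obtain rfl := toMultiset_injective hb
  rfl

theorem sumAppend_surjective : Function.Surjective (sumAppend : _ → SymmProd n (X ⊕ Y)) := by
  intro q
  obtain ⟨a, ha⟩ := exists_toMultiset_eq (s := q.toMultiset.toLeft) rfl
  obtain ⟨b, hb⟩ := exists_toMultiset_eq (s := q.toMultiset.toRight) rfl
  have hcard : Multiset.card q.toMultiset.toLeft + Multiset.card q.toMultiset.toRight = n := by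
    rw [← Multiset.card_disjSum, Multiset.toLeft_disjSum_toRight, card_toMultiset]
  refine ⟨⟨⟨(_, _), hcard⟩, a, b⟩, toMultiset_injective ?_⟩
  rw [toMultiset_sumAppend]
  exact (congrArg₂ Multiset.disjSum ha hb).trans q.toMultiset.toLeft_disjSum_toRight

theorem isHomeomorph_sumAppend : IsHomeomorph (sumAppend : _ → SymmProd n (X ⊕ Y)) := by
  have hq := IsOpenQuotientMap.sigmaMap (f := id)
    (B := fun kl : {p : ℕ × ℕ // p.1 + p.2 = n} => SymmProd kl.1.1 X × SymmProd kl.1.2 Y)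
    Function.surjective_id fun _ => isOpenQuotientMap_mk.prodMap isOpenQuotientMap_mk
  have hmk : IsOpenQuotientMap (Quotient.mk (symmSetoid n (X ⊕ Y))) := isOpenQuotientMap_mk
  -- `sumAppend` composed with the quotient map `hq` is, by definition, `Quotient.mk ∘ Fin.sumAppend`.
  refine hq.isHomeomorph_of_comp ?_ ?_ ⟨sumAppend_injective, sumAppend_surjective⟩
  · exact hmk.continuous.comp
      (continuous_sigma fun kl => (Fin.isOpenEmbedding_sumAppend kl.2).continuous)
  · exact hmk.isOpenMap.comp
      (isOpenMap_sigma.2 fun kl => (Fin.isOpenEmbedding_sumAppend kl.2).isOpenMap)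

end SymmProd

/-- The `n`-th symmetric product of a disjoint union `X ⊔ Y` is homeomorphic to
the disjoint union over `k + l = n` of the products `SP^k(X) × SP^l(Y)`. -/
theorem symmProd_sum_homeomorph (X Y : Type) [TopologicalSpace X] [TopologicalSpace Y]
    (n : ℕ) :
    Nonempty (SymmProd n (X ⊕ Y) ≃ₜ
      Σ kl : {p : ℕ × ℕ // p.1 + p.2 = n}, SymmProd kl.1.1 X × SymmProd kl.1.2 Y) :=
  ⟨(SymmProd.isHomeomorph_sumAppend.homeomorph _).symm⟩
end
end

section
/- Let Y be a compact Hausdorff space, let X = Y ⊔ Y be the disjoint union of two copies of Y, and let τ : X → X be the involution swapping the two copies. Let k be a natural number and let τ' be the involution of SP^{2k}(X) induced by τ. Then the fixed point set {p ∈ SP^{2k}(X) : τ'(p) = p}, with the subspace topology, is homeomorphic to SP^k(Y). -/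
noncomputable section

/-! ### Auxiliary lemmas -/

section Aux

variable {n : ℕ} {X : Type*} [TopologicalSpace X]

theorem symmProd_isOpenMap_mk (n : ℕ) (X : Type*) [TopologicalSpace X] :
    IsOpenMap (Quotient.mk (symmSetoid n X)) := by
  intro U hU
  have key : Quotient.mk (symmSetoid n X) ⁻¹' (Quotient.mk (symmSetoid n X) '' U)
      = ⋃ γ : Equiv.Perm (Fin n), (fun x : Fin n → X => x ∘ γ) ⁻¹' U := by
    ext x
    simp only [Set.mem_preimage, Set.mem_image, Set.mem_iUnion]
    constructor
    · rintro ⟨u, hu, hux⟩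
      obtain ⟨γ, hγ⟩ := Quotient.exact hux
      subst hγ
      refine ⟨γ⁻¹, ?_⟩
      have : (u ∘ ⇑γ) ∘ ⇑γ⁻¹ = u := by ext i; simp
      rw [this]; exact hu
    · rintro ⟨γ, hγ⟩
      refine ⟨x ∘ γ, hγ, Quotient.sound ⟨γ⁻¹, ?_⟩⟩
      ext i; simp
  have hopen : IsOpen (Quotient.mk (symmSetoid n X) ⁻¹' (Quotient.mk (symmSetoid n X) '' U)) := by
    rw [key]
    refine isOpen_iUnion fun γ => ?_
    have hc : Continuous (fun x : Fin n → X => x ∘ ⇑γ) :=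
      continuous_pi fun i => continuous_apply (γ i)
    exact hc.isOpen_preimage U hU
  exact isOpen_coinduced.2 hopen

instance symmProd_t2 {n : ℕ} {X : Type*} [TopologicalSpace X] [T2Space X] :
    T2Space (SymmProd n X) := by
  constructor
  intro p q
  refine Quotient.inductionOn₂ p q (fun x y hne => ?_)
  have hr : ¬ (symmSetoid n X).r x y := fun h => hne (Quotient.sound h)
  set C : Set ((Fin n → X) × (Fin n → X)) :=
    ⋃ γ : Equiv.Perm (Fin n), {p : (Fin n → X) × (Fin n → X) | p.1 ∘ γ = p.2} with hC
  have hCc : IsClosed C := by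
    apply isClosed_iUnion_of_finite
    intro γ
    have heq : {p : (Fin n → X) × (Fin n → X) | p.1 ∘ γ = p.2}
        = ⋂ i, {p : (Fin n → X) × (Fin n → X) | p.1 (γ i) = p.2 i} := by
      ext p; simp [funext_iff, Function.comp]
    rw [heq]
    exact isClosed_iInter fun i =>
      isClosed_eq ((continuous_apply (γ i)).comp continuous_fst)
        ((continuous_apply i).comp continuous_snd)
  have hxy : (x, y) ∈ Cᶜ := by
    intro hmem
    obtain ⟨γ, hγ⟩ := Set.mem_iUnion.1 hmem
    exact hr ⟨γ, hγ⟩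
  obtain ⟨U, V, hU, hV, hxU, hyV, hUV⟩ := isOpen_prod_iff.1 hCc.isOpen_compl x y hxy
  refine ⟨Quotient.mk _ '' U, Quotient.mk _ '' V, symmProd_isOpenMap_mk n X U hU,
    symmProd_isOpenMap_mk n X V hV, ⟨x, hxU, rfl⟩, ⟨y, hyV, rfl⟩, ?_⟩
  rw [Set.disjoint_left]
  rintro a ⟨u, hu, rfl⟩ ⟨v, hv, hv2⟩
  obtain ⟨γ, hγ⟩ := Quotient.exact hv2.symm
  exact hUV (Set.mk_mem_prod hu hv) (Set.mem_iUnion.2 ⟨γ, hγ⟩)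

instance symmProd_compact {n : ℕ} {X : Type*} [TopologicalSpace X] [CompactSpace X] :
    CompactSpace (SymmProd n X) :=
  Quotient.compactSpace

/-- The standard identification `Fin k ⊕ Fin k ≃ Fin (2 * k)`. -/
def eSum (k : ℕ) : (Fin k ⊕ Fin k) ≃ Fin (2 * k) :=
  finSumFinEquiv.trans (finCongr (two_mul k).symm)

/-- The diagonal doubling map on tuples. -/
def gg {Y : Type*} (k : ℕ) (x : Fin k → Y) : Fin (2 * k) → Y ⊕ Y :=
  fun i => Sum.map x x ((eSum k).symm i)

theorem gg_apply_e {Y : Type*} (k : ℕ) (x : Fin k → Y) (s : Fin k ⊕ Fin k) :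
    gg k x (eSum k s) = Sum.map x x s := by
  simp [gg]

theorem gg_continuous {Y : Type*} [TopologicalSpace Y] (k : ℕ) :
    Continuous fun x : Fin k → Y => gg k x := by
  refine continuous_pi fun i => ?_
  rcases hs : (eSum k).symm i with j | j
  · have : (fun x : Fin k → Y => gg k x i) = fun x => Sum.inl (x j) := by
      funext x; simp [gg, hs]
    rw [this]
    exact continuous_inl.comp (continuous_apply j)
  · have : (fun x : Fin k → Y => gg k x i) = fun x => Sum.inr (x j) := by
      funext x; simp [gg, hs]
    rw [this]
    exact continuous_inr.comp (continuous_apply j)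

theorem gg_respects {Y : Type*} (k : ℕ) {x y : Fin k → Y}
    (h : (symmSetoid k Y).r x y) : (symmSetoid (2 * k) (Y ⊕ Y)).r (gg k x) (gg k y) := by
  obtain ⟨δ, hδ⟩ := h
  refine ⟨(eSum k).symm.trans ((Equiv.sumCongr δ δ).trans (eSum k)), funext fun i => ?_⟩
  have : gg k x ((eSum k) ((Equiv.sumCongr δ δ) ((eSum k).symm i)))
      = Sum.map x x ((Equiv.sumCongr δ δ) ((eSum k).symm i)) := gg_apply_e k x _
  show gg k x ((eSum k) ((Equiv.sumCongr δ δ) ((eSum k).symm i))) = gg k y i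
  rw [this]
  rcases hs : (eSum k).symm i with j | j <;>
    simp [gg, hs, show ∀ j, x (δ j) = y j from fun j => congrFun hδ j]

theorem gg_swap {Y : Type*} (k : ℕ) (x : Fin k → Y) :
    (symmSetoid (2 * k) (Y ⊕ Y)).r (Sum.swap ∘ gg k x) (gg k x) := by
  refine ⟨((eSum k).symm.trans ((Equiv.sumComm (Fin k) (Fin k)).trans (eSum k)))⁻¹,
    funext fun i => ?_⟩
  show Sum.swap (gg k x ((((eSum k).symm.trans ((Equiv.sumComm (Fin k) (Fin k)).trans
      (eSum k))))⁻¹ i)) = gg k x i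
  have key : ∀ i, gg k x (((eSum k).symm.trans ((Equiv.sumComm (Fin k) (Fin k)).trans
      (eSum k))) i) = Sum.swap (gg k x i) := by
    intro i
    have h1 : gg k x ((eSum k) ((Equiv.sumComm (Fin k) (Fin k)) ((eSum k).symm i)))
        = Sum.map x x ((Equiv.sumComm (Fin k) (Fin k)) ((eSum k).symm i)) := gg_apply_e k x _
    show gg k x ((eSum k) ((Equiv.sumComm (Fin k) (Fin k)) ((eSum k).symm i)))
        = Sum.swap (gg k x i)
    rw [h1]
    rcases hs : (eSum k).symm i with j | j <;> simp [gg, hs]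
  set c := (eSum k).symm.trans ((Equiv.sumComm (Fin k) (Fin k)).trans (eSum k)) with hc
  have := key (c⁻¹ i)
  rw [show c (c⁻¹ i) = i from c.apply_symm_apply i] at this
  rw [← this]

theorem gg_inj {Y : Type*} {k : ℕ} {x y : Fin k → Y}
    (h : (symmSetoid (2 * k) (Y ⊕ Y)).r (gg k x) (gg k y)) : (symmSetoid k Y).r x y := by
  classical
  obtain ⟨γ, hγ⟩ := h
  set e := eSum k with he
  have key : ∀ s, Sum.map x x (e.symm (γ (e s))) = Sum.map y y s := by
    intro s
    have h1 : gg k x (γ (e s)) = gg k y (e s) := congrFun hγ (e s)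
    rw [gg_apply_e] at h1
    rw [← h1]
    rfl
  have hσ : ∀ j : Fin k, ∃ j', e.symm (γ (e (Sum.inl j))) = Sum.inl j' ∧ x j' = y j := by
    intro j
    have hk := key (Sum.inl j)
    rcases hs : e.symm (γ (e (Sum.inl j))) with j' | j'
    · rw [hs] at hk; exact ⟨j', rfl, by simpa using hk⟩
    · rw [hs] at hk; simp at hk
  choose σ hσ1 hσ2 using hσ
  have hinj : Function.Injective σ := by
    intro a b hab
    have h2 : e.symm (γ (e (Sum.inl a))) = e.symm (γ (e (Sum.inl b))) := by
      rw [hσ1 a, hσ1 b, hab]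
    have := e.injective (γ.injective (e.symm.injective h2))
    exact Sum.inl.inj this
  exact ⟨Equiv.ofBijective σ (Finite.injective_iff_bijective.1 hinj), funext hσ2⟩

theorem gg_surj {Y : Type*} {k : ℕ} (z : Fin (2 * k) → Y ⊕ Y)
    (hz : (symmSetoid (2 * k) (Y ⊕ Y)).r (Sum.swap ∘ z) z) :
    ∃ x : Fin k → Y, (symmSetoid (2 * k) (Y ⊕ Y)).r (gg k x) z := by
  classical
  obtain ⟨γ, hγ⟩ := hz
  have hγ' : ∀ i, z (γ i) = Sum.swap (z i) := by
    intro i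
    have h1 : Sum.swap (z (γ i)) = z i := congrFun hγ i
    have h2 := congrArg Sum.swap h1
    rw [Sum.swap_swap] at h2
    exact h2
  set A : Finset (Fin (2 * k)) := Finset.univ.filter (fun i => (z i).isLeft) with hA
  have hmem : ∀ i, i ∈ A ↔ (z i).isLeft := by intro i; simp [hA]
  have hγA : ∀ i, i ∈ A ↔ γ i ∉ A := by
    intro i
    rw [hmem, hmem, hγ' i]
    cases z i <;> simp
  have hcard2 : A.card + Aᶜ.card = 2 * k := by
    simpa using A.card_add_card_compl
  have h1 : A.image γ ⊆ Aᶜ := by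
    intro i hi
    obtain ⟨a, ha, rfl⟩ := Finset.mem_image.1 hi
    simpa [Finset.mem_compl] using (hγA a).1 ha
  have h2 : Aᶜ.image γ ⊆ A := by
    intro i hi
    obtain ⟨a, ha, rfl⟩ := Finset.mem_image.1 hi
    rw [Finset.mem_compl] at ha
    by_contra hc
    exact ha ((hγA a).2 hc)
  have e1 : A.card ≤ Aᶜ.card := by
    rw [← Finset.card_image_of_injective A γ.injective]
    exact Finset.card_le_card h1
  have e2 : Aᶜ.card ≤ A.card := by
    rw [← Finset.card_image_of_injective Aᶜ γ.injective]
    exact Finset.card_le_card h2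
  have hAk : A.card = k := by omega
  set u : Fin k ≃ A := (Finset.equivFinOfCardEq hAk).symm with hu0
  have hu : ∀ j, ((u j : Fin (2 * k)) ∈ A) := fun j => (u j).2
  have hleft : ∀ j, (z (u j)).isLeft := fun j => (hmem _).1 (hu j)
  set x : Fin k → Y := fun j => (z (u j)).getLeft (hleft j) with hx
  have hzx : ∀ j, z (u j) = Sum.inl (x j) := by
    intro j
    exact Sum.eq_left_iff_getLeft_eq.2 ⟨hleft j, rfl⟩
  set w : Fin k ⊕ Fin k → Fin (2 * k) :=
    Sum.elim (fun j => (u j : Fin (2 * k))) (fun j => γ (u j)) with hw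
  have hzw : ∀ s, z (w s) = Sum.map x x s := by
    rintro (j | j)
    · simpa [hw] using hzx j
    · simp only [hw, Sum.elim_inr, Sum.map_inr]
      rw [hγ' (u j), hzx j]
      rfl
  have hwinj : Function.Injective w := by
    rintro (a | a) (b | b) hab <;> simp only [hw, Sum.elim_inl, Sum.elim_inr] at hab
    · exact congrArg Sum.inl (u.injective (Subtype.ext hab))
    · exfalso
      have h3 : γ (u b : Fin (2 * k)) ∉ A := (hγA _).1 (hu b)
      rw [← hab] at h3; exact h3 (hu a)
    · exfalso
      have h3 : γ (u a : Fin (2 * k)) ∉ A := (hγA _).1 (hu a)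
      rw [hab] at h3; exact h3 (hu b)
    · exact congrArg Sum.inr (u.injective (Subtype.ext (γ.injective hab)))
  have hwbij : Function.Bijective w := by
    rw [Fintype.bijective_iff_injective_and_card]
    exact ⟨hwinj, by simp [two_mul]⟩
  set π := Equiv.ofBijective w hwbij with hπ
  refine ⟨x, π.symm.trans (eSum k), funext fun i => ?_⟩
  show gg k x ((eSum k) (π.symm i)) = z i
  rw [gg_apply_e, ← hzw (π.symm i)]
  exact congrArg z (π.apply_symm_apply i)

end Aux

/-- Let `Y` be a compact Hausdorff space, `X = Y ⊔ Y` and `τ` the involution of `X`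
swapping the two copies. The fixed point set of the induced involution of
`SP^{2k}(X)` is homeomorphic to `SP^k(Y)`. -/
theorem fixedPoints_symmProd_swap_homeomorph
    (Y : Type) [TopologicalSpace Y] [CompactSpace Y] [T2Space Y] (k : ℕ) :
    Nonempty ({p : SymmProd (2 * k) (Y ⊕ Y) //
        SymmProd.map (2 * k) (Sum.swap : Y ⊕ Y → Y ⊕ Y) p = p} ≃ₜ SymmProd k Y) := by
  classical
  have hfix : ∀ x : Fin k → Y,
      SymmProd.map (2 * k) (Sum.swap : Y ⊕ Y → Y ⊕ Y)
        (Quotient.mk (symmSetoid (2 * k) (Y ⊕ Y)) (gg k x))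
        = Quotient.mk (symmSetoid (2 * k) (Y ⊕ Y)) (gg k x) := by
    intro x
    have h1 : SymmProd.map (2 * k) (Sum.swap : Y ⊕ Y → Y ⊕ Y)
        (Quotient.mk (symmSetoid (2 * k) (Y ⊕ Y)) (gg k x))
        = Quotient.mk (symmSetoid (2 * k) (Y ⊕ Y)) (Sum.swap ∘ gg k x) := rfl
    rw [h1]
    exact Quotient.sound (gg_swap k x)
  set f : SymmProd k Y → {p : SymmProd (2 * k) (Y ⊕ Y) //
      SymmProd.map (2 * k) (Sum.swap : Y ⊕ Y → Y ⊕ Y) p = p} :=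
    Quotient.lift (fun x : Fin k → Y =>
      (⟨Quotient.mk (symmSetoid (2 * k) (Y ⊕ Y)) (gg k x), hfix x⟩ :
        {p : SymmProd (2 * k) (Y ⊕ Y) //
          SymmProd.map (2 * k) (Sum.swap : Y ⊕ Y → Y ⊕ Y) p = p}))
      (fun a b hab => Subtype.ext (Quotient.sound (gg_respects k hab))) with hf
  have hcont : Continuous f := by
    apply Continuous.quotient_lift
    exact (continuous_quotient_mk'.comp (gg_continuous k)).subtype_mk _
  have hinj : Function.Injective f := by
    intro p q
    refine Quotient.inductionOn₂ p q (fun a b hab => ?_)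
    have : Quotient.mk (symmSetoid (2 * k) (Y ⊕ Y)) (gg k a)
        = Quotient.mk (symmSetoid (2 * k) (Y ⊕ Y)) (gg k b) := congrArg Subtype.val hab
    exact Quotient.sound (gg_inj (Quotient.exact this))
  have hsurj : Function.Surjective f := by
    rintro ⟨p, hp⟩
    obtain ⟨z, rfl⟩ := Quotient.exists_rep p
    have hz : (symmSetoid (2 * k) (Y ⊕ Y)).r (Sum.swap ∘ z) z := by
      have h1 : SymmProd.map (2 * k) (Sum.swap : Y ⊕ Y → Y ⊕ Y)
          (Quotient.mk (symmSetoid (2 * k) (Y ⊕ Y)) z)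
          = Quotient.mk (symmSetoid (2 * k) (Y ⊕ Y)) (Sum.swap ∘ z) := rfl
      rw [h1] at hp
      exact Quotient.exact hp
    obtain ⟨x, hx⟩ := gg_surj z hz
    exact ⟨Quotient.mk (symmSetoid k Y) x, Subtype.ext (Quotient.sound hx)⟩
  exact ⟨(Continuous.homeoOfEquivCompactToT2
    (f := Equiv.ofBijective f ⟨hinj, hsurj⟩) hcont).symm⟩

end
end
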